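/- Let Σ ⊂ ℝ^{n+1} be a translating soliton with tangential translation field V. Then the Gauss map u : Σ → S^n is quasi-harmonic: its tension field satisfies τ(u) = -du(V). -/

import Mathlib

open scoped BigOperators RealInnerProductSpace
open Real

noncomputable section

/-- Partial derivative (in the `i`-th chart direction) of a vector-valued map on ℝⁿ. -/
def pdv {n m : ℕ} (i : Fin n) (f : (Fin n → ℝ) → EuclideanSpace ℝ (Fin m))
    (x : Fin n → ℝ) : EuclideanSpace ℝ (Fin m) :=
  fderiv ℝ f x (Pi.single i 1)

/-- Partial derivative of a scalar function on ℝⁿ. -/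
def pdr {n : ℕ} (i : Fin n) (f : (Fin n → ℝ) → ℝ) (x : Fin n → ℝ) : ℝ :=
  fderiv ℝ f x (Pi.single i 1)

/-- Induced metric g_{ij} = ⟪∂_i F, ∂_j F⟫ of an immersion F. -/
def gmet {n : ℕ} (F : (Fin n → ℝ) → EuclideanSpace ℝ (Fin (n + 1)))
    (x : Fin n → ℝ) : Matrix (Fin n) (Fin n) ℝ :=
  Matrix.of fun i j => ⟪pdv i F x, pdv j F x⟫

/-- Second fundamental form h_{ij} w.r.t. the outer unit normal ν
(convention: positive for convex hypersurfaces with outer normal). -/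
def sff {n : ℕ} (F : (Fin n → ℝ) → EuclideanSpace ℝ (Fin (n + 1)))
    (ν : (Fin n → ℝ) → EuclideanSpace ℝ (Fin (n + 1)))
    (x : Fin n → ℝ) (i j : Fin n) : ℝ :=
  -⟪pdv i (fun y => pdv j F y) x, ν x⟫

/-- Mean curvature H = g^{ij} h_{ij}. -/
def meanCurv {n : ℕ} (F ν : (Fin n → ℝ) → EuclideanSpace ℝ (Fin (n + 1)))
    (x : Fin n → ℝ) : ℝ :=
  ∑ i, ∑ j, (gmet F x)⁻¹ i j * sff F ν x i j

/-- Christoffel symbols Γ^k_{ij} of the induced metric. -/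
def chr {n : ℕ} (F : (Fin n → ℝ) → EuclideanSpace ℝ (Fin (n + 1)))
    (x : Fin n → ℝ) (k i j : Fin n) : ℝ :=
  ∑ l, (gmet F x)⁻¹ k l * ⟪pdv i (fun y => pdv j F y) x, pdv l F x⟫

/-- Scalar Laplace–Beltrami operator of the induced metric. -/
def lapS {n : ℕ} (F : (Fin n → ℝ) → EuclideanSpace ℝ (Fin (n + 1)))
    (f : (Fin n → ℝ) → ℝ) (x : Fin n → ℝ) : ℝ :=
  ∑ i, ∑ j, (gmet F x)⁻¹ i j *
    (pdr i (fun y => pdr j f y) x - ∑ k, chr F x k i j * pdr k f x)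

/-- Componentwise Laplace–Beltrami operator on ℝ^{n+1}-valued maps. -/
def lapV {n : ℕ} (F : (Fin n → ℝ) → EuclideanSpace ℝ (Fin (n + 1)))
    (f : (Fin n → ℝ) → EuclideanSpace ℝ (Fin (n + 1)))
    (x : Fin n → ℝ) : EuclideanSpace ℝ (Fin (n + 1)) :=
  ∑ i, ∑ j, (gmet F x)⁻¹ i j •
    (pdv i (fun y => pdv j f y) x - ∑ k, chr F x k i j • pdv k f x)

/-- Energy density |∇u|² = g^{ij}⟪∂_i u, ∂_j u⟫ of the Gauss map u = ν. -/
def eDen {n : ℕ} (F ν : (Fin n → ℝ) → EuclideanSpace ℝ (Fin (n + 1)))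
    (x : Fin n → ℝ) : ℝ :=
  ∑ i, ∑ j, (gmet F x)⁻¹ i j * ⟪pdv i ν x, pdv j ν x⟫



open scoped ContDiff

section Toolkit

variable {n m : ℕ}

lemma pdv_smooth {f : (Fin n → ℝ) → EuclideanSpace ℝ (Fin m)} (hf : ContDiff ℝ ∞ f)
    (i : Fin n) : ContDiff ℝ ∞ (pdv i f) := by
  have h := (contDiff_infty_iff_fderiv.mp hf).2
  exact (ContinuousLinearMap.apply ℝ _ (Pi.single i 1)).contDiff.comp h

lemma pdr_smooth {f : (Fin n → ℝ) → ℝ} (hf : ContDiff ℝ ∞ f)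
    (i : Fin n) : ContDiff ℝ ∞ (pdr i f) := by
  have h := (contDiff_infty_iff_fderiv.mp hf).2
  exact (ContinuousLinearMap.apply ℝ _ (Pi.single i 1)).contDiff.comp h

lemma pdv_pdv {f : (Fin n → ℝ) → EuclideanSpace ℝ (Fin m)} (hf : ContDiff ℝ ∞ f)
    (i j : Fin n) (x : Fin n → ℝ) :
    pdv i (fun y => pdv j f y) x
      = fderiv ℝ (fderiv ℝ f) x (Pi.single i 1) (Pi.single j 1) := by
  have hdf : DifferentiableAt ℝ (fderiv ℝ f) x :=
    ((contDiff_infty_iff_fderiv.mp hf).2.differentiable (by simp)) x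
  show fderiv ℝ (fun y => fderiv ℝ f y (Pi.single j 1)) x (Pi.single i 1) = _
  rw [fderiv_clm_apply hdf (differentiableAt_const _)]
  simp

lemma pdv_comm {f : (Fin n → ℝ) → EuclideanSpace ℝ (Fin m)} (hf : ContDiff ℝ ∞ f)
    (i j : Fin n) (x : Fin n → ℝ) :
    pdv i (fun y => pdv j f y) x = pdv j (fun y => pdv i f y) x := by
  rw [pdv_pdv hf, pdv_pdv hf]
  exact second_derivative_symmetric
    (fun y => ((hf.differentiable (by simp)) y).hasFDerivAt)
    (((contDiff_infty_iff_fderiv.mp hf).2.differentiable (by simp)) x).hasFDerivAt _ _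

lemma pdr_inner {u v : (Fin n → ℝ) → EuclideanSpace ℝ (Fin m)} {x : Fin n → ℝ}
    (hu : DifferentiableAt ℝ u x) (hv : DifferentiableAt ℝ v x) (i : Fin n) :
    pdr i (fun y => ⟪u y, v y⟫) x = ⟪pdv i u x, v x⟫ + ⟪u x, pdv i v x⟫ := by
  show fderiv ℝ (fun y => ⟪u y, v y⟫) x (Pi.single i 1) = _
  rw [fderiv_inner_apply (𝕜 := ℝ) hu hv]
  rw [add_comm]
  rfl

lemma pdv_smul {c : (Fin n → ℝ) → ℝ} {w : (Fin n → ℝ) → EuclideanSpace ℝ (Fin m)}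
    {x : Fin n → ℝ} (hc : DifferentiableAt ℝ c x) (hw : DifferentiableAt ℝ w x) (i : Fin n) :
    pdv i (fun y => c y • w y) x = pdr i c x • w x + c x • pdv i w x := by
  show fderiv ℝ (fun y => c y • w y) x (Pi.single i 1) = _
  rw [fderiv_fun_smul hc hw]
  simp [pdr, pdv, add_comm]

lemma pdv_add {u v : (Fin n → ℝ) → EuclideanSpace ℝ (Fin m)} {x : Fin n → ℝ}
    (hu : DifferentiableAt ℝ u x) (hv : DifferentiableAt ℝ v x) (i : Fin n) :
    pdv i (fun y => u y + v y) x = pdv i u x + pdv i v x := by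
  show fderiv ℝ (fun y => u y + v y) x (Pi.single i 1) = _
  rw [fderiv_fun_add hu hv]; rfl

lemma pdv_sum {ι : Type*} {s : Finset ι} {f : ι → (Fin n → ℝ) → EuclideanSpace ℝ (Fin m)}
    {x : Fin n → ℝ} (hf : ∀ k ∈ s, DifferentiableAt ℝ (f k) x) (i : Fin n) :
    pdv i (fun y => ∑ k ∈ s, f k y) x = ∑ k ∈ s, pdv i (f k) x := by
  show fderiv ℝ (fun y => ∑ k ∈ s, f k y) x (Pi.single i 1) = _
  rw [fderiv_fun_sum hf]
  simp [pdv]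

lemma pdr_sum {ι : Type*} {s : Finset ι} {f : ι → (Fin n → ℝ) → ℝ}
    {x : Fin n → ℝ} (hf : ∀ k ∈ s, DifferentiableAt ℝ (f k) x) (i : Fin n) :
    pdr i (fun y => ∑ k ∈ s, f k y) x = ∑ k ∈ s, pdr i (f k) x := by
  show fderiv ℝ (fun y => ∑ k ∈ s, f k y) x (Pi.single i 1) = _
  rw [fderiv_fun_sum hf]
  simp [pdr]

lemma pdr_mul {a b : (Fin n → ℝ) → ℝ} {x : Fin n → ℝ}
    (ha : DifferentiableAt ℝ a x) (hb : DifferentiableAt ℝ b x) (i : Fin n) :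
    pdr i (fun y => a y * b y) x = pdr i a x * b x + a x * pdr i b x := by
  show fderiv ℝ (fun y => a y * b y) x (Pi.single i 1) = _
  rw [fderiv_fun_mul ha hb]
  simp [pdr]; ring

lemma pdv_const (c : EuclideanSpace ℝ (Fin m)) (i : Fin n) (x : Fin n → ℝ) :
    pdv i (fun _ => c) x = 0 := by
  show fderiv ℝ (fun _ => c) x (Pi.single i 1) = 0
  rw [fderiv_fun_const]; rfl

lemma pdr_const (c : ℝ) (i : Fin n) (x : Fin n → ℝ) :
    pdr i (fun _ => c) x = 0 := by
  show fderiv ℝ (fun _ => c) x (Pi.single i 1) = 0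
  rw [fderiv_fun_const]; rfl

lemma pdr_neg {a : (Fin n → ℝ) → ℝ} {x : Fin n → ℝ} (i : Fin n) :
    pdr i (fun y => -(a y)) x = -pdr i a x := by
  show fderiv ℝ (fun y => -(a y)) x (Pi.single i 1) = _
  rw [fderiv_fun_neg]; rfl

end Toolkit

section Smooth

variable {n : ℕ} {F ν : (Fin n → ℝ) → EuclideanSpace ℝ (Fin (n + 1))}

lemma inner_smooth {m : ℕ} {u v : (Fin n → ℝ) → EuclideanSpace ℝ (Fin m)}
    (hu : ContDiff ℝ ∞ u) (hv : ContDiff ℝ ∞ v) :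
    ContDiff ℝ ∞ (fun y => ⟪u y, v y⟫) :=
  hu.inner ℝ hv

lemma gmet_smooth (hF : ContDiff ℝ ∞ F) (i j : Fin n) :
    ContDiff ℝ ∞ (fun y => gmet F y i j) :=
  inner_smooth (pdv_smooth hF i) (pdv_smooth hF j)

lemma sff_smooth (hF : ContDiff ℝ ∞ F) (hν : ContDiff ℝ ∞ ν) (i j : Fin n) :
    ContDiff ℝ ∞ (fun y => sff F ν y i j) := by
  have : ContDiff ℝ ∞ (fun y => ⟪pdv i (fun z => pdv j F z) y, ν y⟫) :=
    inner_smooth (pdv_smooth (pdv_smooth hF j) i) hν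
  exact this.neg

lemma det_smooth {k : ℕ} {M : (Fin n → ℝ) → Matrix (Fin k) (Fin k) ℝ}
    (h : ∀ a b, ContDiff ℝ ∞ (fun y => M y a b)) :
    ContDiff ℝ ∞ (fun y => (M y).det) := by
  have : ∀ y, (M y).det
      = ∑ σ : Equiv.Perm (Fin k), ((Equiv.Perm.sign σ : ℤ) : ℝ) * ∏ i, M y (σ i) i := by
    intro y
    rw [Matrix.det_apply]
    congr 1; ext σ; rw [Units.smul_def, zsmul_eq_mul]
  simp only [this]
  apply ContDiff.sum
  intro σ _
  exact (contDiff_const).mul (contDiff_prod (fun i _ => h (σ i) i))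

lemma ginv_smooth (hF : ContDiff ℝ ∞ F) (himm : ∀ x, (gmet F x).det ≠ 0)
    (i j : Fin n) : ContDiff ℝ ∞ (fun y => (gmet F y)⁻¹ i j) := by
  have hdet : ContDiff ℝ ∞ (fun y => (gmet F y).det) :=
    det_smooth (fun a b => gmet_smooth hF a b)
  have hadj : ContDiff ℝ ∞ (fun y => (gmet F y).adjugate i j) := by
    simp only [Matrix.adjugate_apply]
    apply det_smooth
    intro a b
    simp only [Matrix.updateRow_apply]
    by_cases hab : a = j
    · simp only [hab, if_true, reduceIte]
      exact contDiff_const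
    · simp only [hab, if_false]
      exact gmet_smooth hF a b
  have : ∀ y, (gmet F y)⁻¹ i j = ((gmet F y).det)⁻¹ * (gmet F y).adjugate i j := by
    intro y
    rw [Matrix.inv_def, Ring.inverse_eq_inv', Matrix.smul_apply, smul_eq_mul]
  simp only [this]
  exact ContDiff.mul (hdet.inv himm) hadj

end Smooth

section Geo

variable {n : ℕ} {F ν : (Fin n → ℝ) → EuclideanSpace ℝ (Fin (n + 1))} {x : Fin n → ℝ}

lemma gmet_apply (F : (Fin n → ℝ) → EuclideanSpace ℝ (Fin (n + 1))) (x : Fin n → ℝ)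
    (i j : Fin n) : gmet F x i j = ⟪pdv i F x, pdv j F x⟫ := rfl

lemma gmet_symm (i j : Fin n) : gmet F x i j = gmet F x j i := by
  rw [gmet_apply, gmet_apply]; exact real_inner_comm _ _

lemma gmet_transpose : (gmet F x).transpose = gmet F x := by
  ext i j
  rw [Matrix.transpose_apply]
  exact gmet_symm j i

lemma ginv_mul_gmet (himmx : (gmet F x).det ≠ 0) (i j : Fin n) :
    ∑ k, (gmet F x)⁻¹ i k * gmet F x k j = if i = j then 1 else 0 := by
  have h := Matrix.nonsing_inv_mul (gmet F x) (isUnit_iff_ne_zero.mpr himmx)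
  have := congrArg (fun M => M i j) h
  simpa [Matrix.mul_apply, Matrix.one_apply] using this

lemma gmet_mul_ginv (himmx : (gmet F x).det ≠ 0) (i j : Fin n) :
    ∑ k, gmet F x i k * (gmet F x)⁻¹ k j = if i = j then 1 else 0 := by
  have h := Matrix.mul_nonsing_inv (gmet F x) (isUnit_iff_ne_zero.mpr himmx)
  have := congrArg (fun M => M i j) h
  simpa [Matrix.mul_apply, Matrix.one_apply] using this

lemma ginv_symm (i j : Fin n) : (gmet F x)⁻¹ i j = (gmet F x)⁻¹ j i := by
  have h : ((gmet F x)⁻¹).transpose = (gmet F x)⁻¹ := by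
    rw [Matrix.transpose_nonsing_inv, gmet_transpose]
  have := congrArg (fun M => M j i) h
  simpa [Matrix.transpose_apply] using this

lemma nu_pdv_nu (hν : ContDiff ℝ ∞ ν) (hunit : ∀ y, ‖ν y‖ = 1) (i : Fin n) :
    ⟪ν x, pdv i ν x⟫ = 0 := by
  have hd : Differentiable ℝ ν := hν.differentiable (by simp)
  have hconst : (fun y => ⟪ν y, ν y⟫) = fun _ => (1 : ℝ) := by
    funext y
    rw [real_inner_self_eq_norm_sq, hunit y]; norm_num
  have h0 : pdr i (fun y => ⟪ν y, ν y⟫) x = 0 := by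
    rw [hconst, pdr_const]
  rw [pdr_inner (hd x) (hd x)] at h0
  rw [real_inner_comm] at h0
  linarith [h0]

lemma dnu_pF (hF : ContDiff ℝ ∞ F) (hν : ContDiff ℝ ∞ ν)
    (horth : ∀ y i, ⟪ν y, pdv i F y⟫ = 0) (i j : Fin n) :
    ⟪pdv i ν x, pdv j F x⟫ = sff F ν x i j := by
  have hdν : Differentiable ℝ ν := hν.differentiable (by simp)
  have hdF : Differentiable ℝ (pdv j F) := (pdv_smooth hF j).differentiable (by simp)
  have h0 : pdr i (fun y => ⟪ν y, pdv j F y⟫) x = 0 := by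
    have : (fun y => ⟪ν y, pdv j F y⟫) = fun _ => (0 : ℝ) := funext fun y => horth y j
    rw [this, pdr_const]
  rw [pdr_inner (hdν x) (hdF x)] at h0
  have : ⟪pdv i ν x, pdv j F x⟫ = -⟪ν x, pdv i (fun y => pdv j F y) x⟫ := by linarith [h0]
  rw [this, sff, real_inner_comm]

lemma sff_symm (hF : ContDiff ℝ ∞ F) (i j : Fin n) :
    sff F ν x i j = sff F ν x j i := by
  unfold sff
  rw [pdv_comm hF]

lemma chr_symm (hF : ContDiff ℝ ∞ F) (k i j : Fin n) :
    chr F x k i j = chr F x k j i := by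
  unfold chr
  congr 1; funext l
  rw [pdv_comm hF]

lemma perp_zero (hunitx : ‖ν x‖ = 1) (horthx : ∀ i, ⟪ν x, pdv i F x⟫ = 0)
    (himmx : (gmet F x).det ≠ 0) {w : EuclideanSpace ℝ (Fin (n + 1))}
    (hwv : ⟪w, ν x⟫ = 0) (hwF : ∀ j, ⟪w, pdv j F x⟫ = 0) : w = 0 := by
  classical
  set b : Fin (n + 1) → EuclideanSpace ℝ (Fin (n + 1)) :=
    Fin.snoc (fun i => pdv i F x) (ν x) with hb
  have hblast : b (Fin.last n) = ν x := by simp [hb]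
  have hbcast : ∀ i : Fin n, b i.castSucc = pdv i F x := by
    intro i; simp [hb]
  set Gm : Matrix (Fin (n + 1)) (Fin (n + 1)) ℝ :=
    Matrix.of (fun i j => ⟪b i, b j⟫) with hGm
  have hGmlast : ∀ j : Fin n, Gm (Fin.last n) j.castSucc = 0 := by
    intro j; simp only [hGm, Matrix.of_apply, hblast, hbcast]; exact horthx j
  have hGmlastlast : Gm (Fin.last n) (Fin.last n) = 1 := by
    simp only [hGm, Matrix.of_apply, hblast]
    rw [real_inner_self_eq_norm_sq, hunitx]; norm_num
  have hsub : Gm.submatrix (Fin.last n).succAbove (Fin.last n).succAbove = gmet F x := by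
    ext i j
    simp only [Matrix.submatrix_apply, Fin.succAbove_last, hGm, Matrix.of_apply, hbcast]
    rfl
  have hdet : Gm.det ≠ 0 := by
    rw [Matrix.det_succ_row Gm (Fin.last n)]
    have : ∀ j : Fin (n + 1), j ≠ Fin.last n →
        (-1 : ℝ) ^ ((Fin.last n : ℕ) + (j : ℕ)) * Gm (Fin.last n) j *
          (Gm.submatrix (Fin.last n).succAbove j.succAbove).det = 0 := by
      intro j hj
      rcases Fin.exists_castSucc_eq.mpr hj with ⟨j', rfl⟩
      rw [hGmlast j']
      ring
    rw [Finset.sum_eq_single (Fin.last n) (fun j _ hj => this j hj) (by simp)]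
    rw [hGmlastlast, hsub]
    have hsign : (-1 : ℝ) ^ ((Fin.last n : ℕ) + (Fin.last n : ℕ)) = 1 := by
      rw [← two_mul, pow_mul]; norm_num
    rw [hsign]
    simpa using himmx
  have hli : LinearIndependent ℝ b := by
    rw [Fintype.linearIndependent_iff]
    intro c hc
    have hvec : ∀ j, ∑ i, c i * Gm i j = 0 := by
      intro j
      have h0 : ⟪∑ i, c i • b i, b j⟫ = 0 := by rw [hc]; exact inner_zero_left _
      rw [sum_inner] at h0
      rw [Finset.sum_congr rfl (fun i _ => real_inner_smul_left (b i) (b j) (c i))] at h0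
      exact h0
    have hvm : Matrix.vecMul c Gm = 0 := by
      funext j
      simpa [Matrix.vecMul, dotProduct] using hvec j
    have : c = 0 := by
      have h1 : Matrix.vecMul c (Gm * Gm⁻¹) = Matrix.vecMul (Matrix.vecMul c Gm) Gm⁻¹ := by
        rw [Matrix.vecMul_vecMul]
      rw [Matrix.mul_nonsing_inv Gm (isUnit_iff_ne_zero.mpr hdet), Matrix.vecMul_one, hvm] at h1
      rw [h1]
      simp [Matrix.vecMul]
    intro i; rw [this]; rfl
  have hspan : Submodule.span ℝ (Set.range b) = ⊤ := by
    apply hli.span_eq_top_of_card_eq_finrank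
    simp [finrank_euclideanSpace_fin]
  have hw : ∀ i, ⟪b i, w⟫ = 0 := by
    intro i
    rcases Fin.eq_castSucc_or_eq_last i with ⟨i', rfl⟩ | rfl
    · rw [hbcast, real_inner_comm]; exact hwF i'
    · rw [hblast, real_inner_comm]; exact hwv
  have hmem : w ∈ (Submodule.span ℝ (Set.range b))ᗮ := by
    rw [Submodule.mem_orthogonal]
    intro u hu
    induction hu using Submodule.span_induction with
    | mem u hu => rcases hu with ⟨i, rfl⟩; exact hw i
    | zero => exact inner_zero_left _
    | add u v _ _ hu hv => rw [inner_add_left, hu, hv]; ring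
    | smul a u _ hu => rw [real_inner_smul_left, hu]; ring
  rw [hspan, Submodule.top_orthogonal_eq_bot, Submodule.mem_bot] at hmem
  exact hmem

lemma full_decomp (hunitx : ‖ν x‖ = 1) (horthx : ∀ i, ⟪ν x, pdv i F x⟫ = 0)
    (himmx : (gmet F x).det ≠ 0) (w : EuclideanSpace ℝ (Fin (n + 1))) :
    w = (∑ l, (∑ k, (gmet F x)⁻¹ l k * ⟪w, pdv k F x⟫) • pdv l F x) + ⟪w, ν x⟫ • ν x := by
  set w' : EuclideanSpace ℝ (Fin (n + 1)) :=
    (∑ l, (∑ k, (gmet F x)⁻¹ l k * ⟪w, pdv k F x⟫) • pdv l F x) + ⟪w, ν x⟫ • ν x with hw'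
  have h1 : ⟪w - w', ν x⟫ = 0 := by
    rw [inner_sub_left, hw']
    rw [inner_add_left, sum_inner, real_inner_smul_left]
    have : ∀ l ∈ Finset.univ, (∑ k, (gmet F x)⁻¹ l k * ⟪w, pdv k F x⟫) • pdv l F x = (0:EuclideanSpace ℝ (Fin (n+1))) ∨ True := fun _ _ => Or.inr trivial
    have hz : ∀ l : Fin n, ⟪(∑ k, (gmet F x)⁻¹ l k * ⟪w, pdv k F x⟫) • pdv l F x, ν x⟫ = 0 := by
      intro l
      rw [real_inner_smul_left, real_inner_comm, horthx l]
      ring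
    rw [Finset.sum_congr rfl (fun l _ => hz l)]
    have : ⟪ν x, ν x⟫ = 1 := by
      rw [real_inner_self_eq_norm_sq, hunitx]; norm_num
    rw [real_inner_comm (ν x)] at this
    simp [this, hunitx]
  have h2 : ∀ j, ⟪w - w', pdv j F x⟫ = 0 := by
    intro j
    rw [inner_sub_left, hw', inner_add_left, sum_inner, real_inner_smul_left]
    have hnu : ⟪ν x, pdv j F x⟫ = 0 := horthx j
    rw [hnu]
    have hz : ∀ l : Fin n, ⟪(∑ k, (gmet F x)⁻¹ l k * ⟪w, pdv k F x⟫) • pdv l F x, pdv j F x⟫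
        = ∑ k, ⟪w, pdv k F x⟫ * ((gmet F x)⁻¹ l k * gmet F x l j) := by
      intro l
      rw [real_inner_smul_left, Finset.sum_mul]
      congr 1; funext k
      rw [gmet_apply]; ring
    rw [Finset.sum_congr rfl (fun l _ => hz l)]
    rw [Finset.sum_comm]
    have : ∀ k : Fin n, ∑ l, ⟪w, pdv k F x⟫ * ((gmet F x)⁻¹ l k * gmet F x l j)
        = ⟪w, pdv k F x⟫ * (if k = j then 1 else 0) := by
      intro k
      rw [← Finset.mul_sum]
      congr 1
      rw [← ginv_mul_gmet himmx k j]
      congr 1; funext l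
      rw [ginv_symm l k]
    rw [Finset.sum_congr rfl (fun k _ => this k)]
    simp [Finset.sum_ite_eq']
  have := perp_zero hunitx horthx himmx h1 h2
  have : w - w' = 0 := this
  linear_combination (norm := module) this

lemma diffR {k : ℕ} {f : (Fin k → ℝ) → ℝ} (h : ContDiff ℝ ∞ f) : Differentiable ℝ f :=
  h.differentiable (by simp)

lemma diffV {k m : ℕ} {f : (Fin k → ℝ) → EuclideanSpace ℝ (Fin m)} (h : ContDiff ℝ ∞ f) :
    Differentiable ℝ f := h.differentiable (by simp)

lemma gauss_formula (hF : ContDiff ℝ ∞ F)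
    (hunitx : ‖ν x‖ = 1) (horthx : ∀ i, ⟪ν x, pdv i F x⟫ = 0)
    (himmx : (gmet F x).det ≠ 0) (i j : Fin n) :
    pdv i (fun y => pdv j F y) x
      = (∑ k, chr F x k i j • pdv k F x) + (-(sff F ν x i j)) • ν x := by
  have h := full_decomp hunitx horthx himmx (pdv i (fun y => pdv j F y) x)
  rw [h]
  have hcoef : ⟪pdv i (fun y => pdv j F y) x, ν x⟫ = -(sff F ν x i j) := by
    rw [sff, neg_neg]
  rw [hcoef]
  rfl

lemma inner_gauss_tangent (hF : ContDiff ℝ ∞ F) (hν : ContDiff ℝ ∞ ν)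
    (hunit : ∀ y, ‖ν y‖ = 1) (horth : ∀ y i, ⟪ν y, pdv i F y⟫ = 0)
    (himm : ∀ y, (gmet F y).det ≠ 0) (i j b : Fin n) :
    ⟪pdv i (fun y => pdv j F y) x, pdv b F x⟫ = ∑ k, chr F x k i j * gmet F x k b := by
  rw [gauss_formula hF (hunit x) (horth x) (himm x) i j]
  rw [inner_add_left, sum_inner, real_inner_smul_left, horth x b, mul_zero, add_zero]
  apply Finset.sum_congr rfl
  intro k _
  rw [real_inner_smul_left, gmet_apply]

lemma inner_gauss_dnu (hF : ContDiff ℝ ∞ F) (hν : ContDiff ℝ ∞ ν)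
    (hunit : ∀ y, ‖ν y‖ = 1) (horth : ∀ y i, ⟪ν y, pdv i F y⟫ = 0)
    (himm : ∀ y, (gmet F y).det ≠ 0) (i j a : Fin n) :
    ⟪pdv i (fun y => pdv j F y) x, pdv a ν x⟫ = ∑ k, chr F x k i j * sff F ν x a k := by
  rw [gauss_formula hF (hunit x) (horth x) (himm x) i j]
  rw [inner_add_left, sum_inner, real_inner_smul_left, nu_pdv_nu hν hunit a, mul_zero, add_zero]
  apply Finset.sum_congr rfl
  intro k _
  rw [real_inner_smul_left, real_inner_comm, dnu_pF hF hν horth a k]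

lemma sum_delta {N : ℕ} (f : Fin N → ℝ) (j : Fin N) :
    ∑ c, f c * (if c = j then 1 else 0) = f j := by simp

lemma pdr_gmet (hF : ContDiff ℝ ∞ F) (hν : ContDiff ℝ ∞ ν)
    (hunit : ∀ y, ‖ν y‖ = 1) (horth : ∀ y i, ⟪ν y, pdv i F y⟫ = 0)
    (himm : ∀ y, (gmet F y).det ≠ 0) (m a b : Fin n) :
    pdr m (fun y => gmet F y a b) x
      = (∑ k, chr F x k m a * gmet F x k b) + ∑ k, chr F x k m b * gmet F x k a := by
  have h1 : pdr m (fun y => gmet F y a b) x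
      = ⟪pdv m (fun y => pdv a F y) x, pdv b F x⟫ + ⟪pdv a F x, pdv m (fun y => pdv b F y) x⟫ :=
    pdr_inner (diffV (pdv_smooth hF a) x) (diffV (pdv_smooth hF b) x) m
  rw [h1, show ⟪pdv a F x, pdv m (fun y => pdv b F y) x⟫
      = ⟪pdv m (fun y => pdv b F y) x, pdv a F x⟫ from real_inner_comm _ _]
  rw [inner_gauss_tangent hF hν hunit horth himm m a b,
      inner_gauss_tangent hF hν hunit horth himm m b a]

lemma pdr_ginv (hF : ContDiff ℝ ∞ F) (hν : ContDiff ℝ ∞ ν)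
    (hunit : ∀ y, ‖ν y‖ = 1) (horth : ∀ y i, ⟪ν y, pdv i F y⟫ = 0)
    (himm : ∀ y, (gmet F y).det ≠ 0) (m i j : Fin n) :
    pdr m (fun y => (gmet F y)⁻¹ i j) x
      = -(∑ k, (gmet F x)⁻¹ i k * chr F x j m k) - ∑ k, chr F x i m k * (gmet F x)⁻¹ k j := by
  classical
  set g : Matrix (Fin n) (Fin n) ℝ := gmet F x with hg
  set G : Matrix (Fin n) (Fin n) ℝ := (gmet F x)⁻¹ with hGdef
  set Cm : Matrix (Fin n) (Fin n) ℝ := Matrix.of (fun l k => chr F x l m k) with hCm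
  set dGmat : Matrix (Fin n) (Fin n) ℝ :=
    Matrix.of (fun a b => pdr m (fun y => (gmet F y)⁻¹ a b) x) with hdGmat
  set dgmat : Matrix (Fin n) (Fin n) ℝ :=
    Matrix.of (fun a b => pdr m (fun y => gmet F y a b) x) with hdgmat
  have hdiffG : ∀ a b : Fin n, Differentiable ℝ (fun y => (gmet F y)⁻¹ a b) :=
    fun a b => diffR (ginv_smooth hF himm a b)
  have hdiffg : ∀ a b : Fin n, Differentiable ℝ (fun y => gmet F y a b) :=
    fun a b => diffR (gmet_smooth hF a b)
  have hdg_eq : dgmat = Cm.transpose * g + g * Cm := by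
    ext a b
    rw [hdgmat]
    show pdr m (fun y => gmet F y a b) x = _
    rw [pdr_gmet hF hν hunit horth himm m a b]
    rw [Matrix.add_apply, Matrix.mul_apply, Matrix.mul_apply]
    congr 1
    apply Finset.sum_congr rfl; intro k _
    show chr F x k m b * gmet F x k a = g a k * Cm k b
    rw [show g a k = gmet F x k a from gmet_symm a k, mul_comm]
    rfl
  have hzero : dGmat * g + G * dgmat = 0 := by
    ext a b
    rw [Matrix.add_apply, Matrix.mul_apply, Matrix.mul_apply, Matrix.zero_apply]
    have hconst : (fun y => ∑ k, (gmet F y)⁻¹ a k * gmet F y k b)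
        = fun _ => if a = b then (1:ℝ) else 0 := by
      funext y
      exact ginv_mul_gmet (himm y) a b
    have h0 : pdr m (fun y => ∑ k, (gmet F y)⁻¹ a k * gmet F y k b) x = 0 := by
      rw [hconst, pdr_const]
    rw [pdr_sum (f := fun k y => (gmet F y)⁻¹ a k * gmet F y k b) (fun k _ => ((hdiffG a k).mul (hdiffg k b)).differentiableAt) m] at h0
    have hterm : ∀ k : Fin n, pdr m (fun y => (gmet F y)⁻¹ a k * gmet F y k b) x
        = dGmat a k * g k b + G a k * dgmat k b := by
      intro k
      exact pdr_mul ((hdiffG a k) x) ((hdiffg k b) x) m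
    rw [Finset.sum_congr rfl (fun k _ => hterm k), Finset.sum_add_distrib] at h0
    exact h0
  have hunitmat : g * G = 1 := Matrix.mul_nonsing_inv _ (isUnit_iff_ne_zero.mpr (himm x))
  have hunitmat' : G * g = 1 := Matrix.nonsing_inv_mul _ (isUnit_iff_ne_zero.mpr (himm x))
  have hdGeq : dGmat = -(G * Cm.transpose + Cm * G) := by
    have h1 : dGmat * g = -(G * dgmat) := by
      have := hzero
      rw [add_eq_zero_iff_eq_neg] at this
      exact this
    have h2 : dGmat = -(G * dgmat * G) := by
      have := congrArg (fun M => M * G) h1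
      simp only [Matrix.neg_mul] at this
      rw [Matrix.mul_assoc, hunitmat, Matrix.mul_one] at this
      rw [this, Matrix.mul_assoc]
    have hsimp : G * (Cm.transpose * g + g * Cm) * G = G * Cm.transpose + Cm * G := by
      have e1 : G * (Cm.transpose * g + g * Cm) * G
          = G * Cm.transpose * (g * G) + G * g * (Cm * G) := by noncomm_ring
      rw [e1, hunitmat, hunitmat', mul_one, one_mul]
    rw [h2, hdg_eq, hsimp]
  have hfin : dGmat i j = -((∑ k, G i k * Cm.transpose k j) + ∑ k, Cm i k * G k j) := by
    rw [hdGeq]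
    simp [Matrix.mul_apply]
  show dGmat i j = _
  rw [hfin, neg_add, ← sub_eq_add_neg]
  rfl

lemma sum_swap13 {N : ℕ} (f : Fin N → Fin N → Fin N → ℝ) :
    ∑ i, ∑ j, ∑ k, f i j k = ∑ i, ∑ j, ∑ k, f k j i := by
  calc ∑ i, ∑ j, ∑ k, f i j k = ∑ j, ∑ i, ∑ k, f i j k := Finset.sum_comm
    _ = ∑ j, ∑ k, ∑ i, f i j k := Finset.sum_congr rfl (fun j _ => Finset.sum_comm)
    _ = ∑ k, ∑ j, ∑ i, f i j k := Finset.sum_comm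

lemma sum_swap23 {N : ℕ} (f : Fin N → Fin N → Fin N → ℝ) :
    ∑ i, ∑ j, ∑ k, f i j k = ∑ i, ∑ j, ∑ k, f i k j :=
  Finset.sum_congr rfl (fun i _ => Finset.sum_comm)

lemma pdr_sff (hF : ContDiff ℝ ∞ F) (hν : ContDiff ℝ ∞ ν)
    (hunit : ∀ y, ‖ν y‖ = 1) (horth : ∀ y i, ⟪ν y, pdv i F y⟫ = 0)
    (himm : ∀ y, (gmet F y).det ≠ 0) (i j l : Fin n) :
    pdr i (fun y => sff F ν y j l) x
      = -⟪pdv i (fun y => pdv j (fun z => pdv l F z) y) x, ν x⟫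
        - ∑ k, chr F x k j l * sff F ν x i k := by
  have hu : Differentiable ℝ (fun y => pdv j (fun z => pdv l F z) y) :=
    diffV (pdv_smooth (pdv_smooth hF l) j)
  have hdν : Differentiable ℝ ν := diffV hν
  have h1 : pdr i (fun y => sff F ν y j l) x
      = -pdr i (fun y => ⟪pdv j (fun z => pdv l F z) y, ν y⟫) x := by
    have : (fun y => sff F ν y j l)
        = fun y => -⟪pdv j (fun z => pdv l F z) y, ν y⟫ := rfl
    rw [this]
    exact pdr_neg i
  rw [h1, pdr_inner (hu x) (hdν x) i]
  rw [inner_gauss_dnu hF hν hunit horth himm j l i]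
  ring

lemma pdv3_symm (hF : ContDiff ℝ ∞ F) (i j l : Fin n) :
    pdv i (fun y => pdv j (fun z => pdv l F z) y) x
      = pdv l (fun y => pdv i (fun z => pdv j F z) y) x := by
  have h1 : (fun y => pdv j (fun z => pdv l F z) y)
      = (fun y => pdv l (fun z => pdv j F z) y) :=
    funext (fun y => pdv_comm hF j l y)
  rw [h1]
  exact pdv_comm (pdv_smooth hF j) i l x

lemma codazzi (hF : ContDiff ℝ ∞ F) (hν : ContDiff ℝ ∞ ν)
    (hunit : ∀ y, ‖ν y‖ = 1) (horth : ∀ y i, ⟪ν y, pdv i F y⟫ = 0)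
    (himm : ∀ y, (gmet F y).det ≠ 0) (i j l : Fin n) :
    pdr i (fun y => sff F ν y j l) x
      = pdr l (fun y => sff F ν y i j) x
        + ∑ k, chr F x k i j * sff F ν x l k - ∑ k, chr F x k j l * sff F ν x i k := by
  rw [pdr_sff hF hν hunit horth himm i j l, pdr_sff hF hν hunit horth himm l i j,
    pdv3_symm hF i j l]
  ring

lemma pdr_meanCurv (hF : ContDiff ℝ ∞ F) (hν : ContDiff ℝ ∞ ν)
    (himm : ∀ y, (gmet F y).det ≠ 0) (l : Fin n) :
    pdr l (fun y => meanCurv F ν y) x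
      = ∑ i, ∑ j, (pdr l (fun y => (gmet F y)⁻¹ i j) x * sff F ν x i j
          + (gmet F x)⁻¹ i j * pdr l (fun y => sff F ν y i j) x) := by
  have hdiffG : ∀ a b : Fin n, Differentiable ℝ (fun y => (gmet F y)⁻¹ a b) :=
    fun a b => diffR (ginv_smooth hF himm a b)
  have hdiffh : ∀ a b : Fin n, Differentiable ℝ (fun y => sff F ν y a b) :=
    fun a b => diffR (sff_smooth hF hν a b)
  have h1 : (fun y => meanCurv F ν y)
      = fun y => ∑ i, ∑ j, (gmet F y)⁻¹ i j * sff F ν y i j := rfl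
  rw [h1]
  rw [pdr_sum (f := fun i y => ∑ j, (gmet F y)⁻¹ i j * sff F ν y i j) (fun i _ => DifferentiableAt.fun_sum
    (fun j _ => (((hdiffG i j) x).mul ((hdiffh i j) x)))) l]
  apply Finset.sum_congr rfl
  intro i _
  rw [pdr_sum (f := fun j y => (gmet F y)⁻¹ i j * sff F ν y i j) (fun j _ => ((hdiffG i j) x).mul ((hdiffh i j) x)) l]
  apply Finset.sum_congr rfl
  intro j _
  exact pdr_mul ((hdiffG i j) x) ((hdiffh i j) x) l

set_option maxHeartbeats 2000000 in
lemma key_contraction (hF : ContDiff ℝ ∞ F) (hν : ContDiff ℝ ∞ ν)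
    (hunit : ∀ y, ‖ν y‖ = 1) (horth : ∀ y i, ⟪ν y, pdv i F y⟫ = 0)
    (himm : ∀ y, (gmet F y).det ≠ 0) (l : Fin n) :
    ∑ i, ∑ j, (gmet F x)⁻¹ i j *
      (pdr i (fun y => sff F ν y j l) x - ∑ k, chr F x k i l * sff F ν x j k
        - ∑ k, chr F x k i j * sff F ν x k l)
      = pdr l (fun y => meanCurv F ν y) x := by
  classical
  set G : Fin n → Fin n → ℝ := fun a b => (gmet F x)⁻¹ a b with hG
  set Γ : Fin n → Fin n → Fin n → ℝ := fun k a b => chr F x k a b with hΓ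
  set h : Fin n → Fin n → ℝ := fun a b => sff F ν x a b with hh
  -- rewrite LHS using codazzi
  have hcod : ∀ i j, pdr i (fun y => sff F ν y j l) x
      = pdr l (fun y => sff F ν y i j) x + ∑ k, Γ k i j * h l k - ∑ k, Γ k j l * h i k :=
    fun i j => codazzi hF hν hunit horth himm i j l
  have hLHS : ∑ i, ∑ j, G i j *
      (pdr i (fun y => sff F ν y j l) x - ∑ k, Γ k i l * h j k - ∑ k, Γ k i j * h k l)
      = (∑ i, ∑ j, G i j * pdr l (fun y => sff F ν y i j) x)
        - ((∑ i, ∑ j, ∑ k, G i j * (Γ k j l * h i k))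
          + ∑ i, ∑ j, ∑ k, G i j * (Γ k i l * h j k)) := by
    have hpt : ∀ i j, G i j *
        (pdr i (fun y => sff F ν y j l) x - ∑ k, Γ k i l * h j k - ∑ k, Γ k i j * h k l)
        = G i j * pdr l (fun y => sff F ν y i j) x
          - (∑ k, G i j * (Γ k j l * h i k)) - ∑ k, G i j * (Γ k i l * h j k) := by
      intro i j
      rw [hcod i j]
      have hcancel : ∑ k, Γ k i j * h l k = ∑ k, Γ k i j * h k l := by
        apply Finset.sum_congr rfl; intro k _
        rw [show h l k = h k l from sff_symm hF l k]
      rw [← Finset.mul_sum, ← Finset.mul_sum]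
      linear_combination G i j * hcancel
    rw [Finset.sum_congr rfl (fun i _ => Finset.sum_congr rfl (fun j _ => hpt i j))]
    simp only [Finset.sum_sub_distrib]
    ring
  rw [hLHS, pdr_meanCurv hF hν himm l]
  rw [Finset.sum_congr rfl (fun i _ => Finset.sum_add_distrib), Finset.sum_add_distrib]
  have hdGsum : ∑ i, ∑ j, pdr l (fun y => (gmet F y)⁻¹ i j) x * sff F ν x i j
      = -((∑ i, ∑ j, ∑ k, G i j * (Γ k j l * h i k))
          + ∑ i, ∑ j, ∑ k, G i j * (Γ k i l * h j k)) := by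
    have hpt : ∀ i j, pdr l (fun y => (gmet F y)⁻¹ i j) x * sff F ν x i j
        = -((∑ k, G i k * (Γ j l k * h i j)) + ∑ k, Γ i l k * (G k j * h i j)) := by
      intro i j
      simp only [hG, hΓ, hh]
      rw [pdr_ginv hF hν hunit horth himm l i j]
      have e1 : ∑ k, (gmet F x)⁻¹ i k * (chr F x j l k * sff F ν x i j)
          = (∑ k, (gmet F x)⁻¹ i k * chr F x j l k) * sff F ν x i j := by
        rw [Finset.sum_mul]; apply Finset.sum_congr rfl; intro k _; ring
      have e2 : ∑ k, chr F x i l k * ((gmet F x)⁻¹ k j * sff F ν x i j)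
          = (∑ k, chr F x i l k * (gmet F x)⁻¹ k j) * sff F ν x i j := by
        rw [Finset.sum_mul]; apply Finset.sum_congr rfl; intro k _; ring
      rw [e1, e2]; ring
    rw [Finset.sum_congr rfl (fun i _ => Finset.sum_congr rfl (fun j _ => hpt i j))]
    simp only [neg_add, Finset.sum_add_distrib, Finset.sum_neg_distrib]
    congr 1
    · -- claim A
      rw [neg_inj]
      rw [sum_swap23 (fun i j k => G i k * (Γ j l k * h i j))]
      apply Finset.sum_congr rfl; intro i _
      apply Finset.sum_congr rfl; intro j _
      apply Finset.sum_congr rfl; intro k _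
      rw [show Γ k l j = Γ k j l from chr_symm hF k l j]
    · -- claim B
      rw [neg_inj]
      rw [sum_swap13 (fun i j k => Γ i l k * (G k j * h i j))]
      apply Finset.sum_congr rfl; intro i _
      apply Finset.sum_congr rfl; intro j _
      apply Finset.sum_congr rfl; intro k _
      rw [show Γ k l i = Γ k i l from chr_symm hF k l i,
          show h k j = h j k from sff_symm hF k j]
      ring
  rw [hdGsum]
  simp only [hG, hΓ, hh]
  ring

lemma pdv2nu_nu (hν : ContDiff ℝ ∞ ν) (hunit : ∀ y, ‖ν y‖ = 1) (i j : Fin n) :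
    ⟪pdv i (fun y => pdv j ν y) x, ν x⟫ = -⟪pdv j ν x, pdv i ν x⟫ := by
  have hdν : Differentiable ℝ ν := diffV hν
  have hdj : Differentiable ℝ (fun y => pdv j ν y) := diffV (pdv_smooth hν j)
  have h0 : pdr i (fun y => ⟪pdv j ν y, ν y⟫) x = 0 := by
    have : (fun y => ⟪pdv j ν y, ν y⟫) = fun _ => (0:ℝ) := by
      funext y
      rw [real_inner_comm]
      exact nu_pdv_nu hν hunit j
    rw [this, pdr_const]
  rw [pdr_inner (hdj x) (hdν x) i] at h0
  linarith [h0]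

lemma inner_lapV (w : EuclideanSpace ℝ (Fin (n + 1))) :
    ⟪lapV F ν x, w⟫ = ∑ i, ∑ j, (gmet F x)⁻¹ i j *
      (⟪pdv i (fun y => pdv j ν y) x, w⟫ - ∑ k, chr F x k i j * ⟪pdv k ν x, w⟫) := by
  unfold lapV
  rw [sum_inner]
  apply Finset.sum_congr rfl; intro i _
  rw [sum_inner]
  apply Finset.sum_congr rfl; intro j _
  rw [real_inner_smul_left]
  congr 1
  rw [inner_sub_left, sum_inner]
  congr 1
  apply Finset.sum_congr rfl; intro k _
  rw [real_inner_smul_left]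

lemma inner_lapV_nu (hν : ContDiff ℝ ∞ ν) (hunit : ∀ y, ‖ν y‖ = 1) :
    ⟪lapV F ν x, ν x⟫ = -eDen F ν x := by
  rw [inner_lapV (ν x)]
  unfold eDen
  rw [← Finset.sum_neg_distrib]
  apply Finset.sum_congr rfl; intro i _
  rw [← Finset.sum_neg_distrib]
  apply Finset.sum_congr rfl; intro j _
  rw [pdv2nu_nu hν hunit i j]
  have hz : ∀ k : Fin n, chr F x k i j * ⟪pdv k ν x, ν x⟫ = 0 := by
    intro k
    rw [real_inner_comm, nu_pdv_nu hν hunit k, mul_zero]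
  rw [Finset.sum_congr rfl (fun k _ => hz k), Finset.sum_const_zero, sub_zero]
  rw [show ⟪pdv j ν x, pdv i ν x⟫ = ⟪pdv i ν x, pdv j ν x⟫ from real_inner_comm _ _]
  ring

lemma pdv2nu_pF (hF : ContDiff ℝ ∞ F) (hν : ContDiff ℝ ∞ ν)
    (hunit : ∀ y, ‖ν y‖ = 1) (horth : ∀ y i, ⟪ν y, pdv i F y⟫ = 0)
    (himm : ∀ y, (gmet F y).det ≠ 0) (i j l : Fin n) :
    ⟪pdv i (fun y => pdv j ν y) x, pdv l F x⟫
      = pdr i (fun y => sff F ν y j l) x - ∑ k, chr F x k i l * sff F ν x j k := by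
  have hdj : Differentiable ℝ (fun y => pdv j ν y) := diffV (pdv_smooth hν j)
  have hdl : Differentiable ℝ (fun y => pdv l F y) := diffV (pdv_smooth hF l)
  have h0 : pdr i (fun y => ⟪pdv j ν y, pdv l F y⟫) x = pdr i (fun y => sff F ν y j l) x := by
    congr 1
    funext y
    exact dnu_pF hF hν horth j l
  rw [pdr_inner (hdj x) (hdl x) i] at h0
  have h2 : ⟪pdv j ν x, pdv i (fun y => pdv l F y) x⟫ = ∑ k, chr F x k i l * sff F ν x j k := by
    rw [real_inner_comm]
    exact inner_gauss_dnu hF hν hunit horth himm i l j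
  rw [h2] at h0
  linarith [h0]

lemma inner_lapV_pF (hF : ContDiff ℝ ∞ F) (hν : ContDiff ℝ ∞ ν)
    (hunit : ∀ y, ‖ν y‖ = 1) (horth : ∀ y i, ⟪ν y, pdv i F y⟫ = 0)
    (himm : ∀ y, (gmet F y).det ≠ 0) (l : Fin n) :
    ⟪lapV F ν x, pdv l F x⟫ = pdr l (fun y => meanCurv F ν y) x := by
  rw [inner_lapV (pdv l F x)]
  rw [← key_contraction hF hν hunit horth himm l]
  apply Finset.sum_congr rfl; intro i _
  apply Finset.sum_congr rfl; intro j _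
  congr 1
  rw [pdv2nu_pF hF hν hunit horth himm i j l]
  have hk : ∀ k : Fin n, chr F x k i j * ⟪pdv k ν x, pdv l F x⟫
      = chr F x k i j * sff F ν x k l := by
    intro k
    rw [dnu_pF hF hν horth k l]
  rw [Finset.sum_congr rfl (fun k _ => hk k)]

lemma soliton_pdrH {V : (Fin n → ℝ) → Fin n → ℝ} {T : EuclideanSpace ℝ (Fin (n + 1))}
    (hF : ContDiff ℝ ∞ F) (hν : ContDiff ℝ ∞ ν) (hVsm : ContDiff ℝ ∞ V)
    (hunit : ∀ y, ‖ν y‖ = 1) (horth : ∀ y i, ⟪ν y, pdv i F y⟫ = 0)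
    (himm : ∀ y, (gmet F y).det ≠ 0)
    (hdecomp : ∀ y, T = (∑ i, V y i • pdv i F y) + (-(meanCurv F ν y)) • ν y)
    (m : Fin n) :
    pdr m (fun y => meanCurv F ν y) x = -∑ j, V x j * sff F ν x m j := by
  have hVj : ∀ j : Fin n, Differentiable ℝ (fun y => V y j) :=
    fun j => diffR (contDiff_pi.mp hVsm j)
  have hHd : Differentiable ℝ (fun y => meanCurv F ν y) := by
    have h1 : (fun y => meanCurv F ν y)
        = fun y => ∑ i, ∑ j, (gmet F y)⁻¹ i j * sff F ν y i j := rfl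
    rw [h1]
    apply Differentiable.fun_sum; intro i _
    apply Differentiable.fun_sum; intro j _
    exact (diffR (ginv_smooth hF himm i j)).mul (diffR (sff_smooth hF hν i j))
  have hterm : ∀ j : Fin n, Differentiable ℝ (fun y => V y j • pdv j F y) :=
    fun j => (hVj j).smul (diffV (pdv_smooth hF j))
  have hAd : Differentiable ℝ (fun y => ∑ j, V y j • pdv j F y) := by
    apply Differentiable.fun_sum; intro j _; exact hterm j
  have hBd : Differentiable ℝ (fun y => (-(meanCurv F ν y)) • ν y) :=
    (hHd.neg).smul (diffV hν)
  have h0 : pdv m (fun y => (∑ j, V y j • pdv j F y) + (-(meanCurv F ν y)) • ν y) x = 0 := by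
    have : (fun y => (∑ j, V y j • pdv j F y) + (-(meanCurv F ν y)) • ν y)
        = fun _ => T := funext fun y => (hdecomp y).symm
    rw [this, pdv_const]
  rw [pdv_add (hAd x) (hBd x) m] at h0
  rw [pdv_sum (fun j _ => (hterm j) x) m] at h0
  rw [Finset.sum_congr rfl
    (fun j _ => pdv_smul ((hVj j) x) ((diffV (pdv_smooth hF j)) x) m)] at h0
  rw [pdv_smul (c := fun y => -meanCurv F ν y) ((hHd.neg) x) ((diffV hν) x) m] at h0
  have hinner := congrArg (fun w => ⟪w, ν x⟫) h0
  simp only [inner_zero_left] at hinner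
  rw [inner_add_left, sum_inner, inner_add_left] at hinner
  have hnn : ⟪ν x, ν x⟫ = 1 := by
    rw [real_inner_self_eq_norm_sq, hunit x]; norm_num
  have hterm2 : ∀ j : Fin n,
      ⟪pdr m (fun y => V y j) x • pdv j F x + V x j • pdv m (fun y => pdv j F y) x, ν x⟫
      = V x j * (-(sff F ν x m j)) := by
    intro j
    rw [inner_add_left, real_inner_smul_left, real_inner_smul_left]
    have e1 : ⟪pdv j F x, ν x⟫ = 0 := by
      rw [real_inner_comm]; exact horth x j
    have e2 : ⟪pdv m (fun y => pdv j F y) x, ν x⟫ = -(sff F ν x m j) := by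
      rw [sff, neg_neg]
    rw [e1, e2]
    ring
  rw [Finset.sum_congr rfl (fun j _ => hterm2 j)] at hinner
  rw [real_inner_smul_left, real_inner_smul_left, hnn] at hinner
  have e3 : ⟪pdv m ν x, ν x⟫ = 0 := by
    rw [real_inner_comm]; exact nu_pdv_nu hν hunit m
  rw [e3] at hinner
  have e4 : pdr m (fun y => -meanCurv F ν y) x = -pdr m (fun y => meanCurv F ν y) x :=
    pdr_neg m
  rw [e4] at hinner
  have e5 : ∑ j, V x j * (-(sff F ν x m j)) = -∑ j, V x j * sff F ν x m j := by
    rw [← Finset.sum_neg_distrib]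
    apply Finset.sum_congr rfl; intro j _; ring
  rw [e5] at hinner
  linarith [hinner]

end Geo

set_option maxHeartbeats 1000000 in
/-- the Gauss map of a translating soliton is quasi-harmonic:
τ(u) = -du(V), where the tension field of the sphere-valued map u = ν is computed
extrinsically as τ(u) = Δ_Σ u + |∇u|² u and du(V) = V^i ∂_i ν. -/
theorem gauss_map_quasi_harmonic
    {n : ℕ} (hn : 2 ≤ n)
    (F ν : (Fin n → ℝ) → EuclideanSpace ℝ (Fin (n + 1)))
    (T : EuclideanSpace ℝ (Fin (n + 1)))
    (V : (Fin n → ℝ) → Fin n → ℝ) (hVsm : ContDiff ℝ (⊤ : ℕ∞) V)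
    (hF : ContDiff ℝ (⊤ : ℕ∞) F) (hν : ContDiff ℝ (⊤ : ℕ∞) ν)
    (hunit : ∀ x, ‖ν x‖ = 1)
    (horth : ∀ x i, ⟪ν x, pdv i F x⟫ = 0)
    (himm : ∀ x, (gmet F x).det ≠ 0)
    (hsol : ∀ x, ⟪T, ν x⟫ = -meanCurv F ν x)
    (hdecomp : ∀ x, T = (∑ i, V x i • pdv i F x) + (-(meanCurv F ν x)) • ν x) :
    ∀ x, lapV F ν x + eDen F ν x • ν x = -(∑ i, V x i • pdv i ν x) := by
  intro x
  have hF' : ContDiff ℝ ∞ F := hF.of_le (by simp)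
  have hν' : ContDiff ℝ ∞ ν := hν.of_le (by simp)
  have hV' : ContDiff ℝ ∞ V := hVsm.of_le (by simp)
  have hnn : ⟪ν x, ν x⟫ = 1 := by
    rw [real_inner_self_eq_norm_sq, hunit x]; norm_num
  have hWv : ⟪lapV F ν x + eDen F ν x • ν x + ∑ i, V x i • pdv i ν x, ν x⟫ = 0 := by
    rw [inner_add_left, inner_add_left, inner_lapV_nu hν' hunit, real_inner_smul_left, hnn,
      sum_inner]
    have hz : ∀ i : Fin n, ⟪V x i • pdv i ν x, ν x⟫ = 0 := by
      intro i
      rw [real_inner_smul_left, real_inner_comm, nu_pdv_nu hν' hunit i, mul_zero]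
    rw [Finset.sum_congr rfl (fun i _ => hz i), Finset.sum_const_zero]
    ring
  have hWF : ∀ l, ⟪lapV F ν x + eDen F ν x • ν x + ∑ i, V x i • pdv i ν x, pdv l F x⟫ = 0 := by
    intro l
    rw [inner_add_left, inner_add_left, inner_lapV_pF hF' hν' hunit horth himm l,
      real_inner_smul_left, sum_inner]
    have e1 : ⟪ν x, pdv l F x⟫ = 0 := horth x l
    have hz : ∀ i : Fin n, ⟪V x i • pdv i ν x, pdv l F x⟫ = V x i * sff F ν x l i := by
      intro i
      rw [real_inner_smul_left, dnu_pF hF' hν' horth i l, sff_symm hF' i l]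
    rw [Finset.sum_congr rfl (fun i _ => hz i), e1]
    rw [soliton_pdrH hF' hν' hV' hunit horth himm hdecomp l]
    ring
  have hW0 := perp_zero (hunit x) (horth x) (himm x) hWv hWF
  exact eq_neg_of_add_eq_zero_left hW0

end
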